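/- arXiv:1604.08844 — 2 statements merged into one kernel-verified Lean document; each statement's English description precedes it below -/
import Mathlib

section
/- Let λ be regular, let A_i ⊆ Q_i be ≼-antichains for 1 ≤ i ≤ n−1, and set v = a_1χ_{A_1} + … + a_{n−1}χ_{A_{n−1}}. For a Dyck path d = ((i_1,j_1), …, (i_N,j_N)) one has S(v,d) = M(λ,d) if and only if d intersects each antichain A_i with i_1 ≤ i ≤ i_N in exactly one element. -/
open Finset

/-- Valid index pairs `1 ≤ i < j ≤ n` for type `A`. -/
def ValidPair (n : ℕ) (p : ℕ × ℕ) : Prop :=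
  1 ≤ p.1 ∧ p.1 < p.2 ∧ p.2 ≤ n

/-- One step of a Dyck path: move to the upper-right or the bottom-right neighbour. -/
def PathStep (p q : ℕ × ℕ) : Prop :=
  q = (p.1 + 1, p.2) ∨ q = (p.1, p.2 + 1)

/-- A (type `A`) Dyck path. -/
def IsDyckPath (n : ℕ) (d : List (ℕ × ℕ)) : Prop :=
  d ≠ [] ∧ (∀ p ∈ d, ValidPair n p) ∧
  (∃ i, d.head? = some (i, i + 1)) ∧
  (∃ i, d.getLast? = some (i, i + 1)) ∧
  List.Chain' PathStep d

/-- `S(x,d)`, the sum of the coordinates of `x` along the path `d`. -/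
noncomputable def Sval (x : ℕ × ℕ → ℝ) (d : List (ℕ × ℕ)) : ℝ :=
  (d.map x).sum

/-- `M(λ,d) = a_{i₁} + a_{i₁+1} + … + a_{i_N}` for the weight with coordinates `a`. -/
def Mval (a : ℕ → ℕ) (d : List (ℕ × ℕ)) : ℕ :=
  ∑ i ∈ (d.map Prod.fst).toFinset, a i

/-- The FFLV polytope `P_λ` of the `sl_n`-weight with fundamental-weight coordinates `a`,
realized inside the functions `ℕ × ℕ → ℝ` supported on valid pairs. -/
def FFLV (n : ℕ) (a : ℕ → ℕ) : Set (ℕ × ℕ → ℝ) :=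
  {x | (∀ p, ¬ ValidPair n p → x p = 0) ∧ (∀ p, 0 ≤ x p) ∧
       ∀ d, IsDyckPath n d → Sval x d ≤ (Mval a d : ℝ)}

/-- The partial order `≼` on pairs. -/
def preceq (p q : ℕ × ℕ) : Prop := p.1 ≤ q.1 ∧ p.2 ≤ q.2

/-- The set `Q_i = {(k,l) : 1 ≤ k ≤ i, i+1 ≤ l ≤ n}`. -/
def Qset (n i : ℕ) : Set (ℕ × ℕ) :=
  {p | 1 ≤ p.1 ∧ p.1 ≤ i ∧ i + 1 ≤ p.2 ∧ p.2 ≤ n}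

/-- The indicator vector `χ_A` of a set of pairs. -/
noncomputable def chi (A : Set (ℕ × ℕ)) : ℕ × ℕ → ℝ :=
  A.indicator fun _ => (1 : ℝ)

/-- Auxiliary strict-increase relation along a Dyck path. -/
def Rrel (p q : ℕ × ℕ) : Prop := p.1 ≤ q.1 ∧ p.2 ≤ q.2 ∧ p.1 + p.2 < q.1 + q.2

instance : IsTrans (ℕ × ℕ) Rrel :=
  ⟨fun _ _ _ h h' => ⟨le_trans h.1 h'.1, le_trans h.2.1 h'.2.1, lt_trans h.2.2 h'.2.2⟩⟩

lemma pathStep_Rrel {p q : ℕ × ℕ} (h : PathStep p q) : Rrel p q := by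
  rcases h with h | h <;> subst h <;> exact ⟨by omega, by omega, by omega⟩

lemma dyck_pairwise {d : List (ℕ × ℕ)} (hc : List.Chain' PathStep d) :
    List.Pairwise Rrel d :=
  List.isChain_iff_pairwise.mp (hc.imp fun _ _ h => pathStep_Rrel h)

lemma pairwise_head {d : List (ℕ × ℕ)} {p : ℕ × ℕ} (hpw : List.Pairwise Rrel d)
    (hp : d.head? = some p) : ∀ q ∈ d, q = p ∨ Rrel p q := by
  cases d with
  | nil => simp at hp
  | cons x t =>
    simp only [List.head?_cons, Option.some.injEq] at hp
    subst hp
    intro q hq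
    rcases List.mem_cons.mp hq with h | h
    · exact Or.inl h
    · exact Or.inr ((List.pairwise_cons.mp hpw).1 q h)

lemma pairwise_last {d : List (ℕ × ℕ)} {p : ℕ × ℕ} (hpw : List.Pairwise Rrel d)
    (hne : d ≠ []) (hp : d.getLast? = some p) : ∀ q ∈ d, q = p ∨ Rrel q p := by
  have hlast : d.getLast hne = p := by
    have := List.getLast?_eq_getLast hne
    rw [hp] at this; exact (Option.some.injEq _ _ ▸ this.symm)
  have hd : d.dropLast ++ [p] = d := by
    rw [← hlast]; exact List.dropLast_append_getLast hne
  rw [← hd] at hpw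
  obtain ⟨_, _, h3⟩ := List.pairwise_append.mp hpw
  intro q hq
  rw [← hd] at hq
  rcases List.mem_append.mp hq with h | h
  · exact Or.inr (h3 q h p (by simp))
  · exact Or.inl (by simpa using h)

lemma first_coords_interval : ∀ (d : List (ℕ × ℕ)) (p q : ℕ × ℕ),
    List.Chain' PathStep d → d.head? = some p → d.getLast? = some q →
    (d.map Prod.fst).toFinset = Finset.Icc p.1 q.1 := by
  intro d
  induction d with
  | nil => intro p q _ hp _; simp at hp
  | cons x t ih =>
    intro p q hc hp hq
    simp only [List.head?_cons, Option.some.injEq] at hp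
    subst hp
    cases t with
    | nil =>
      simp only [List.getLast?_singleton, Option.some.injEq] at hq
      subst hq; simp
    | cons y t' =>
      have hstep : PathStep x y := hc.rel_head
      have hc' : List.Chain' PathStep (y :: t') := hc.tail
      have hq' : (y :: t').getLast? = some q := by
        rw [← hq]; rfl
      have ihy := ih y q hc' rfl hq'
      have hyq : y.1 ≤ q.1 := by
        have hm : y.1 ∈ ((y :: t').map Prod.fst).toFinset := by simp
        rw [ihy] at hm; exact (Finset.mem_Icc.mp hm).2
      have hstep' : y.1 = x.1 + 1 ∨ y.1 = x.1 := by
        rcases hstep with h | h <;> subst h <;> simp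
      have : ((x :: y :: t').map Prod.fst).toFinset
          = insert x.1 ((y :: t').map Prod.fst).toFinset := by
        simp [List.toFinset_cons]
      rw [this, ihy]
      ext k
      simp only [Finset.mem_insert, Finset.mem_Icc]
      omega
/-- for `v = Σ a_iχ_{A_i}` and a Dyck path `d`, one has `S(v,d) = M(λ,d)` iff
`d` meets each antichain `A_i`, `i₁ ≤ i ≤ i_N`, in exactly one element. -/
theorem path_equality_iff_meets_each_antichain (n : ℕ) (hn : 2 ≤ n) (a : ℕ → ℕ)
    (hreg : ∀ i ∈ Finset.Icc 1 (n - 1), 0 < a i)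
    (A : ℕ → Set (ℕ × ℕ))
    (hA : ∀ i ∈ Finset.Icc 1 (n - 1), A i ⊆ Qset n i ∧ IsAntichain preceq (A i))
    (v : ℕ × ℕ → ℝ)
    (hv : v = fun p => ∑ i ∈ Finset.Icc 1 (n - 1), (a i : ℝ) * chi (A i) p)
    (d : List (ℕ × ℕ)) (hd : IsDyckPath n d) (p₁ pN : ℕ × ℕ)
    (h1 : d.head? = some p₁) (hN : d.getLast? = some pN) :
    Sval v d = (Mval a d : ℝ) ↔
      ∀ i ∈ Finset.Icc p₁.1 pN.1, ∃! q, q ∈ d ∧ q ∈ A i := by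
  classical
  obtain ⟨hne, hvalid, ⟨i1, hh⟩, ⟨iN, hl⟩, hchain⟩ := hd
  have hp1 : p₁ = (i1, i1 + 1) := by rw [h1] at hh; exact Option.some.injEq _ _ ▸ hh
  have hpN : pN = (iN, iN + 1) := by rw [hN] at hl; exact Option.some.injEq _ _ ▸ hl
  have hp1mem : p₁ ∈ d := List.mem_of_mem_head? (by rw [h1]; rfl)
  have hpNmem : pN ∈ d := List.mem_of_mem_getLast? (by rw [hN]; rfl)
  have hp1v := hvalid p₁ hp1mem
  have hpNv := hvalid pN hpNmem
  have hpw : List.Pairwise Rrel d := dyck_pairwise hchain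
  have hnodup : d.Nodup :=
    hpw.imp fun {p q} h => fun e => by subst e; exact absurd h.2.2 (lt_irrefl _)
  have hhead := pairwise_head hpw h1
  have hlast := pairwise_last hpw hne hN
  -- bounds on elements of d
  have hbound : ∀ q ∈ d, p₁.1 ≤ q.1 ∧ q.2 ≤ pN.2 := by
    intro q hq
    constructor
    · rcases hhead q hq with h | h
      · rw [h]
      · exact h.1
    · rcases hlast q hq with h | h
      · rw [h]
      · exact h.2.1
  -- first coordinates form an interval
  have hIcc : (d.map Prod.fst).toFinset = Finset.Icc p₁.1 pN.1 :=
    first_coords_interval d p₁ pN hchain h1 hN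
  have hMval : (Mval a d : ℝ) = ∑ i ∈ Finset.Icc p₁.1 pN.1, (a i : ℝ) := by
    rw [Mval, hIcc]; push_cast; rfl
  -- counts
  set F : Finset (ℕ × ℕ) := d.toFinset with hF
  set c : ℕ → ℕ := fun i => (F.filter (· ∈ A i)).card with hc
  have hchi : ∀ i, ∑ p ∈ F, chi (A i) p = (c i : ℝ) := by
    intro i
    have : ∀ p, chi (A i) p = if p ∈ A i then (1:ℝ) else 0 := by
      intro p; simp [chi, Set.indicator_apply]
    simp only [this]
    rw [Finset.sum_boole]
  have hSval : Sval v d = ∑ i ∈ Finset.Icc 1 (n - 1), (a i : ℝ) * (c i : ℝ) := by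
    rw [Sval, ← List.sum_toFinset v hnodup, hv]
    rw [Finset.sum_comm]
    refine Finset.sum_congr rfl fun i _ => ?_
    rw [← Finset.mul_sum, hchi]
  -- c i ≤ 1 on the relevant range
  have hle : ∀ i ∈ Finset.Icc 1 (n - 1), c i ≤ 1 := by
    intro i hi
    rw [hc]
    apply Finset.card_le_one.mpr
    intro p hp q hq
    simp only [Finset.mem_filter, List.mem_toFinset, hF] at hp hq
    by_contra hne'
    have hcomp : Rrel p q ∨ Rrel q p := by
      have hsym : Symmetric (fun p q => Rrel p q ∨ Rrel q p) := fun _ _ h => h.symm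
      haveI : Std.Symm (fun p q => Rrel p q ∨ Rrel q p) := ⟨hsym⟩
      exact (List.Pairwise.forall (R := fun p q => Rrel p q ∨ Rrel q p) (hpw.imp fun h => Or.inl h)) hp.1 hq.1 hne'
    rcases hcomp with h | h
    · exact (hA i hi).2 hp.2 hq.2 hne' ⟨h.1, h.2.1⟩
    · exact (hA i hi).2 hq.2 hp.2 (Ne.symm hne') ⟨h.1, h.2.1⟩
  -- c i = 0 outside [p₁.1, pN.1]
  have hzero : ∀ i ∈ Finset.Icc 1 (n - 1), i ∉ Finset.Icc p₁.1 pN.1 → c i = 0 := by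
    intro i hi hni
    rw [hc, Finset.card_eq_zero]
    rw [Finset.filter_eq_empty_iff]
    intro q hq
    simp only [List.mem_toFinset, hF] at hq
    intro hqA
    have hQ := (hA i hi).1 hqA
    obtain ⟨_, hq1, hq2, _⟩ := hQ
    obtain ⟨hb1, hb2⟩ := hbound q hq
    simp only [Finset.mem_Icc, not_and, not_le] at hni
    have hpN2 : pN.2 = pN.1 + 1 := by rw [hpN]
    omega
  -- interval inclusion
  have hsub : Finset.Icc p₁.1 pN.1 ⊆ Finset.Icc 1 (n - 1) := by
    intro i hi
    simp only [Finset.mem_Icc] at hi ⊢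
    have h11 : 1 ≤ p₁.1 := hp1v.1
    have hN2 : pN.2 ≤ n := hpNv.2.2
    have hpN2 : pN.2 = pN.1 + 1 := by rw [hpN]
    omega
  have hSval' : Sval v d = ∑ i ∈ Finset.Icc p₁.1 pN.1, (a i : ℝ) * (c i : ℝ) := by
    rw [hSval]
    symm
    apply Finset.sum_subset hsub
    intro i hi hni
    rw [hzero i hi hni]
    simp
  -- uniqueness-count equivalence
  have hcard : ∀ i ∈ Finset.Icc 1 (n - 1), (c i = 1 ↔ ∃! q, q ∈ d ∧ q ∈ A i) := by
    intro i hi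
    constructor
    · intro h
      obtain ⟨q, hq⟩ := Finset.card_eq_one.mp h
      have hqm : q ∈ F.filter (· ∈ A i) := by rw [hq]; simp
      simp only [Finset.mem_filter, List.mem_toFinset, hF] at hqm
      refine ⟨q, hqm, ?_⟩
      intro r hr
      have : r ∈ F.filter (· ∈ A i) := by
        simp only [Finset.mem_filter, List.mem_toFinset, hF]; exact hr
      rw [hq] at this; simpa using this
    · rintro ⟨q, hq, -⟩
      refine le_antisymm (hle i hi) ?_
      rw [Nat.one_le_iff_ne_zero, ← Nat.pos_iff_ne_zero]
      apply Finset.card_pos.mpr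
      exact ⟨q, by simp only [Finset.mem_filter, List.mem_toFinset, hF]; exact hq⟩
  -- main chain of iffs
  rw [hSval', hMval]
  have hterm : ∀ i ∈ Finset.Icc p₁.1 pN.1, (a i : ℝ) * (c i : ℝ) ≤ (a i : ℝ) := by
    intro i hi
    have := hle i (hsub hi)
    calc (a i : ℝ) * (c i : ℝ) ≤ (a i : ℝ) * 1 := by
          apply mul_le_mul_of_nonneg_left _ (by positivity)
          exact_mod_cast this
    _ = (a i : ℝ) := mul_one _
  rw [Finset.sum_eq_sum_iff_of_le hterm]
  constructor
  · intro h i hi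
    have hi' := hsub hi
    rw [← hcard i hi']
    have := h i hi
    have ha : (0:ℝ) < (a i : ℝ) := by exact_mod_cast hreg i hi'
    have hc1 : (c i : ℝ) = 1 := mul_left_cancel₀ ha.ne' (this.trans (mul_one _).symm)
    exact_mod_cast hc1
  · intro h i hi
    have hi' := hsub hi
    have : c i = 1 := (hcard i hi').mpr (h i hi)
    rw [this]; simp
end

section
/- For every E ∈ R_p the point x(E) lies in P_λ and is a vertex of P_λ. -/
open Finset

/-- The Dyck path `d^{i,j} = ((i,i+1),…,(i,j),(i+1,j),…,(j-1,j))`. -/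
def dseg (i j : ℕ) : List (ℕ × ℕ) :=
  ((List.range (j - i)).map fun t => (i, i + 1 + t)) ++
  ((List.range (j - i - 1)).map fun t => (i + 1 + t, j))

/-- `x` is the point `x(E)`: it vanishes outside `E` and for `[i,j] ∈ E` one has
`S(x(E),d^{i,j}) = a_i + … + a_{j-1}`. -/
def IsXE (n : ℕ) (a : ℕ → ℕ) (E : Finset (ℕ × ℕ)) (x : ℕ × ℕ → ℝ) : Prop :=
  (∀ p, p ∉ E → x p = 0) ∧
  ∀ p ∈ E, Sval x (dseg p.1 p.2) = ∑ k ∈ Finset.Ico p.1 p.2, (a k : ℝ)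

/-- `E ∈ R_p`: a set of segments (encoded by their endpoint pairs) inside `[1,n]` such that
the (nonempty) intersection of any two of its segments is a positive-length segment of `E`. -/
def Rp (n : ℕ) (E : Finset (ℕ × ℕ)) : Prop :=
  (∀ p ∈ E, ValidPair n p) ∧
  ∀ p ∈ E, ∀ q ∈ E, max p.1 q.1 ≤ min p.2 q.2 →
    max p.1 q.1 < min p.2 q.2 ∧ (max p.1 q.1, min p.2 q.2) ∈ E

/-- `p` is a peak of the Dyck path `d`. -/
def IsPeak (d : List (ℕ × ℕ)) (p : ℕ × ℕ) : Prop :=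
  p ∈ d ∧ (p.1, p.2 - 1) ∈ d ∧ (p.1 + 1, p.2) ∈ d

/-- `p` is a valley of the Dyck path `d`. -/
def IsValley (d : List (ℕ × ℕ)) (p : ℕ × ℕ) : Prop :=
  p ∈ d ∧ (p.1 - 1, p.2) ∈ d ∧ (p.1, p.2 + 1) ∈ d

----------------------------------------------------------------
-- auxiliary development
----------------------------------------------------------------

/-- `q` is a subsegment of `p` sharing an endpoint with it (the segments indexing the
entries of the Dyck path `dseg p.1 p.2`). -/
def SubSeg (q p : ℕ × ℕ) : Prop :=
  p.1 ≤ q.1 ∧ q.2 ≤ p.2 ∧ q.1 < q.2 ∧ (q.1 = p.1 ∨ q.2 = p.2)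

def StrictSub (q p : ℕ × ℕ) : Prop := SubSeg q p ∧ q ≠ p

lemma StrictSub.len {q p : ℕ × ℕ} (h : StrictSub q p) : q.2 - q.1 < p.2 - p.1 := by
  obtain ⟨⟨h1, h2, h3, h4⟩, h5⟩ := h
  have : q.1 ≠ p.1 ∨ q.2 ≠ p.2 := by
    by_contra hc
    push_neg at hc
    exact h5 (Prod.ext hc.1 hc.2)
  omega

/-- The indicator predicate of the antichain `A_i(E)` (the minimal "layers" of `E`
around the gap `(i, i+1)`). -/
def inA (E : Finset (ℕ × ℕ)) (i : ℕ) (p : ℕ × ℕ) : Prop :=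
  p ∈ E ∧ p.1 ≤ i ∧ i < p.2 ∧ ∀ q, StrictSub q p → ¬ inA E i q
termination_by p.2 - p.1
decreasing_by exact StrictSub.len ‹_›

lemma inA_iff (E : Finset (ℕ × ℕ)) (i : ℕ) (p : ℕ × ℕ) :
    inA E i p ↔ p ∈ E ∧ p.1 ≤ i ∧ i < p.2 ∧ ∀ q, StrictSub q p → ¬ inA E i q := by
  rw [inA]

lemma inA_mem {E i p} (h : inA E i p) : p ∈ E := ((inA_iff E i p).1 h).1
lemma inA_gap {E i p} (h : inA E i p) : p.1 ≤ i ∧ i < p.2 :=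
  ⟨((inA_iff E i p).1 h).2.1, ((inA_iff E i p).1 h).2.2.1⟩
lemma inA_min {E i p} (h : inA E i p) : ∀ q, StrictSub q p → ¬ inA E i q :=
  ((inA_iff E i p).1 h).2.2.2

lemma Rp.valid {n E} (hE : Rp n E) {p : ℕ × ℕ} (hp : p ∈ E) : 1 ≤ p.1 ∧ p.1 < p.2 ∧ p.2 ≤ n :=
  hE.1 p hp

/-- intersection of two `E`-segments containing the gap `(i,i+1)` -/
lemma Rp.inter {n E} (hE : Rp n E) {p q : ℕ × ℕ} {i : ℕ} (hp : p ∈ E) (hq : q ∈ E)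
    (hp1 : p.1 ≤ i) (hp2 : i < p.2) (hq1 : q.1 ≤ i) (hq2 : i < q.2) :
    max p.1 q.1 < min p.2 q.2 ∧ (max p.1 q.1, min p.2 q.2) ∈ E :=
  hE.2 p hp q hq (by omega)

/-- two incomparable (under inclusion-of-segments) members of `A_i` cannot overlap -/
lemma inA_no_overlap {n E i} (hE : Rp n E) {q q' : ℕ × ℕ}
    (hq : inA E i q) (hq' : inA E i q') (h1 : q.1 < q'.1) (h2 : q.2 < q'.2) : False := by
  obtain ⟨hg1, hg2⟩ := inA_gap hq
  obtain ⟨hg1', hg2'⟩ := inA_gap hq'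
  obtain ⟨hlt, hmem⟩ := hE.inter (inA_mem hq) (inA_mem hq') hg1 hg2 hg1' hg2'
  set r : ℕ × ℕ := (max q.1 q'.1, min q.2 q'.2) with hr
  have hr1 : r.1 = q'.1 := by simp [hr]; omega
  have hr2 : r.2 = q.2 := by simp [hr]; omega
  -- r is a strict subsegment of q sharing the right endpoint
  have hsubq : StrictSub r q := by
    refine ⟨⟨by omega, by omega, by omega, Or.inr hr2⟩, ?_⟩
    intro h; rw [h] at hr1; omega
  have hsubq' : StrictSub r q' := by
    refine ⟨⟨by omega, by omega, by omega, Or.inl hr1⟩, ?_⟩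
    intro h; rw [h] at hr2; omega
  have hrnA : ¬ inA E i r := inA_min hq r hsubq
  rw [inA_iff] at hrnA
  push_neg at hrnA
  obtain ⟨s, hs, hsA⟩ := hrnA hmem (by omega) (by omega)
  obtain ⟨⟨hs1, hs2, hs3, hs4⟩, hs5⟩ := hs
  rcases hs4 with h4 | h4
  · -- s shares left endpoint with r, hence with q' : contradicts hq'
    exact inA_min hq' s ⟨⟨by omega, by omega, hs3, Or.inl (by omega)⟩,
      fun h => by rw [h] at hs2 hs1; omega⟩ hsA
  · -- s shares right endpoint with r, hence with q : contradicts hq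
    refine inA_min hq s ⟨⟨by omega, by omega, hs3, Or.inr (by omega)⟩, ?_⟩ hsA
    intro h; rw [h] at hs1; omega

/-- `A_i` is an "antichain": two distinct members are strictly nested on both sides. -/
lemma inA_nested {n E i} (hE : Rp n E) {q q' : ℕ × ℕ}
    (hq : inA E i q) (hq' : inA E i q') (hne : q ≠ q') :
    (q'.1 < q.1 ∧ q.2 < q'.2) ∨ (q.1 < q'.1 ∧ q'.2 < q.2) := by
  obtain ⟨hg1, hg2⟩ := inA_gap hq
  obtain ⟨hg1', hg2'⟩ := inA_gap hq'
  have hval : q.1 < q.2 := by omega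
  have hval' : q'.1 < q'.2 := by omega
  have hcoord : q.1 ≠ q'.1 ∨ q.2 ≠ q'.2 := by
    by_contra hc; push_neg at hc; exact hne (Prod.ext hc.1 hc.2)
  -- rule out sharing an endpoint
  have hL : q.1 ≠ q'.1 := by
    intro h
    have h2 : q.2 ≠ q'.2 := by omega
    rcases Nat.lt_or_ge q.2 q'.2 with hlt | hge
    · exact inA_min hq' q ⟨⟨by omega, by omega, hval, Or.inl h⟩, hne⟩ hq
    · exact inA_min hq q' ⟨⟨by omega, by omega, hval', Or.inl h.symm⟩, Ne.symm hne⟩ hq'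
  have hR : q.2 ≠ q'.2 := by
    intro h
    rcases Nat.lt_or_ge q.1 q'.1 with hlt | hge
    · exact inA_min hq q' ⟨⟨by omega, by omega, hval', Or.inr h.symm⟩, Ne.symm hne⟩ hq'
    · exact inA_min hq' q ⟨⟨by omega, by omega, hval, Or.inr h⟩, hne⟩ hq
  rcases Nat.lt_or_ge q.1 q'.1 with hlt | hge
  · rcases Nat.lt_or_ge q.2 q'.2 with hlt2 | hge2
    · exact absurd (inA_no_overlap hE hq hq' hlt hlt2) (by simp)
    · right; omega
  · rcases Nat.lt_or_ge q'.2 q.2 with hlt2 | hge2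
    · exact absurd (inA_no_overlap hE hq' hq (by omega) hlt2) (by simp)
    · left; omega

/-- exactly one member of `A_i` lies on the path `dseg p.1 p.2`, for `p ∈ E` containing
the gap. -/
lemma inA_exists_unique {n E} (hE : Rp n E) {p : ℕ × ℕ} {i : ℕ}
    (hp : p ∈ E) (h1 : p.1 ≤ i) (h2 : i < p.2) :
    ∃! q, SubSeg q p ∧ inA E i q := by
  have hval : p.1 < p.2 := (hE.valid hp).2.1
  have huniq : ∀ q q', (SubSeg q p ∧ inA E i q) → (SubSeg q' p ∧ inA E i q') → q = q' := by
    rintro q q' ⟨hsq, hAq⟩ ⟨hsq', hAq'⟩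
    by_contra hne
    rcases inA_nested hE hAq hAq' hne with ⟨ha, hb⟩ | ⟨ha, hb⟩
    · obtain ⟨u1, u2, u3, u4⟩ := hsq
      obtain ⟨v1, v2, v3, v4⟩ := hsq'
      omega
    · obtain ⟨u1, u2, u3, u4⟩ := hsq
      obtain ⟨v1, v2, v3, v4⟩ := hsq'
      omega
  by_cases hA : inA E i p
  · exact ⟨p, ⟨⟨le_rfl, le_rfl, hval, Or.inl rfl⟩, hA⟩, fun q hq => huniq q p hq
      ⟨⟨le_rfl, le_rfl, hval, Or.inl rfl⟩, hA⟩⟩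
  · rw [inA_iff] at hA
    push_neg at hA
    obtain ⟨s, hs, hsA⟩ := hA hp h1 h2
    exact ⟨s, ⟨hs.1, hsA⟩, fun q hq => huniq q s hq ⟨hs.1, hsA⟩⟩

----------------------------------------------------------------
-- dseg lemmas
----------------------------------------------------------------

lemma mem_dseg' {i j q1 q2 : ℕ} :
    (q1, q2) ∈ dseg i j ↔ (i ≤ q1 ∧ q2 ≤ j ∧ q1 < q2 ∧ (q1 = i ∨ q2 = j)) := by
  simp only [dseg, List.mem_append, List.mem_map, List.mem_range, Prod.mk.injEq]
  constructor
  · rintro (⟨t, ht, he1, he2⟩ | ⟨t, ht, he1, he2⟩) <;> omega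
  · rintro ⟨h1, h2, h3, h4 | h4⟩
    · exact Or.inl ⟨q2 - i - 1, by omega, by omega, by omega⟩
    · by_cases hq1 : q1 = i
      · exact Or.inl ⟨q2 - i - 1, by omega, by omega, by omega⟩
      · exact Or.inr ⟨q1 - i - 1, by omega, by omega, by omega⟩

lemma mem_dseg {i j : ℕ} {q : ℕ × ℕ} :
    q ∈ dseg i j ↔ SubSeg q (i, j) := by
  obtain ⟨q1, q2⟩ := q
  rw [mem_dseg']
  simp only [SubSeg]

lemma dseg_nodup (i j : ℕ) : (dseg i j).Nodup := by
  refine List.Nodup.append ?_ ?_ ?_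
  · exact List.Nodup.map (fun a b h => by simpa using h) List.nodup_range
  · exact List.Nodup.map (fun a b h => by simpa using h) List.nodup_range
  · intro q hq hq'
    simp only [List.mem_map, List.mem_range] at hq hq'
    obtain ⟨t, ht, rfl⟩ := hq
    obtain ⟨s, hs, h⟩ := hq'
    rw [Prod.ext_iff] at h
    simp at h
    omega

lemma dseg_firsts {i j : ℕ} (hij : i < j) :
    ((dseg i j).map Prod.fst).toFinset = Finset.Ico i j := by
  ext k
  simp only [List.mem_toFinset, List.mem_map, Finset.mem_Ico]
  constructor
  · rintro ⟨q, hq, rfl⟩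
    obtain ⟨h1, h2, h3, h4⟩ := mem_dseg.1 hq
    simp at h1 h2 h4
    omega
  · rintro ⟨h1, h2⟩
    by_cases hk : k = i
    · exact ⟨(i, i+1), mem_dseg.2 ⟨by simp, by simp; omega, by simp, Or.inl rfl⟩, by simp [hk]⟩
    · exact ⟨(k, j), mem_dseg.2 ⟨by simp; omega, by simp, by simp; omega, Or.inr rfl⟩, rfl⟩

lemma Mval_dseg (a : ℕ → ℕ) {i j : ℕ} (hij : i < j) :
    Mval a (dseg i j) = ∑ k ∈ Finset.Ico i j, a k := by
  rw [Mval, dseg_firsts hij]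

lemma dseg_dyck {n i j : ℕ} (h1 : 1 ≤ i) (hij : i < j) (hjn : j ≤ n) :
    IsDyckPath n (dseg i j) := by
  obtain ⟨m, hm⟩ : ∃ m, j - i = m + 1 := ⟨j - i - 1, by omega⟩
  refine ⟨?_, ?_, ?_, ?_, ?_⟩
  · exact List.ne_nil_of_mem (mem_dseg.2 ⟨le_rfl, by simp; omega, by simp, Or.inl rfl⟩ :
      (i, i+1) ∈ dseg i j)
  · intro p hp
    obtain ⟨u1, u2, u3, u4⟩ := mem_dseg.1 hp
    simp at u1 u2
    exact ⟨by omega, u3, by omega⟩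
  · refine ⟨i, ?_⟩
    rw [dseg, hm, List.range_succ_eq_map]
    simp
  · refine ⟨j - 1, ?_⟩
    have hj1 : j - 1 + 1 = j := by omega
    by_cases h2 : j - i - 1 = 0
    · rw [dseg, h2, hm]
      have hm0 : m = 0 := by omega
      rw [hm0]
      simp [List.range_succ, Prod.ext_iff]
      omega
    · obtain ⟨m', hm'⟩ : ∃ m', j - i - 1 = m' + 1 := ⟨j - i - 2, by omega⟩
      rw [dseg, hm', List.range_succ, List.map_append, List.map_singleton,
        ← List.append_assoc, List.getLast?_concat]
      simp [Prod.ext_iff]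
      omega
  · rw [dseg]
    unfold List.Chain'
    rw [List.isChain_append]
    refine ⟨?_, ?_, ?_⟩
    · rw [List.isChain_map, hm, List.isChain_range_succ]
      intro k hk
      right
      rw [Prod.ext_iff]; simp; omega
    · rw [List.isChain_map]
      by_cases h2 : j - i - 1 = 0
      · rw [h2]; simp
      · obtain ⟨m', hm'⟩ : ∃ m', j - i - 1 = m' + 1 := ⟨j - i - 2, by omega⟩
        rw [hm', List.isChain_range_succ]
        intro k hk
        left
        rw [Prod.ext_iff]; simp; omega
    · intro p hp q hq
      rw [hm, List.range_succ, List.map_append, List.map_singleton,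
        List.getLast?_concat] at hp
      simp only [Option.mem_def, Option.some_inj] at hp
      by_cases h2 : j - i - 1 = 0
      · rw [h2] at hq; simp at hq
      · obtain ⟨m', hm'⟩ : ∃ m', j - i - 1 = m' + 1 := ⟨j - i - 2, by omega⟩
        rw [hm', List.range_succ_eq_map] at hq
        simp only [List.map_cons, List.head?_cons, Option.mem_def, Option.some_inj] at hq
        left
        rw [← hp, ← hq, Prod.ext_iff]
        simp
        omega

----------------------------------------------------------------
-- Sval helpers
----------------------------------------------------------------

lemma Sval_sub (x y : ℕ × ℕ → ℝ) (d : List (ℕ × ℕ)) :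
    Sval x d - Sval y d = (d.map fun q => x q - y q).sum := by
  induction d with
  | nil => simp [Sval]
  | cons a l ih =>
    simp only [Sval, List.map_cons, List.sum_cons] at ih ⊢
    linarith

lemma Sval_combo (c1 c2 : ℝ) (x y : ℕ × ℕ → ℝ) (d : List (ℕ × ℕ)) :
    Sval (c1 • x + c2 • y) d = c1 * Sval x d + c2 * Sval y d := by
  induction d with
  | nil => simp [Sval]
  | cons a l ih =>
    simp only [Sval, List.map_cons, List.sum_cons] at ih ⊢
    simp only [Pi.add_apply, Pi.smul_apply, smul_eq_mul]
    rw [ih]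
    ring

lemma sum_single (l : List (ℕ × ℕ)) (f : ℕ × ℕ → ℝ) (p : ℕ × ℕ)
    (h : ∀ q ∈ l, q ≠ p → f q = 0) :
    (l.map f).sum = (l.count p : ℝ) * f p := by
  induction l with
  | nil => simp
  | cons a l ih =>
    have hl := ih fun q hq => h q (List.mem_cons_of_mem a hq)
    rw [List.map_cons, List.sum_cons, hl]
    by_cases ha : a = p
    · subst ha
      rw [List.count_cons_self]
      push_cast
      ring
    · rw [h a (List.mem_cons_self) ha]
      simp [List.count_cons, ha]

lemma list_sum_finset_sum (l : List (ℕ × ℕ)) (S : Finset ℕ) (g : ℕ → ℕ × ℕ → ℝ) :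
    (l.map fun q => ∑ i ∈ S, g i q).sum = ∑ i ∈ S, (l.map (g i)).sum := by
  induction l with
  | nil => simp
  | cons a l ih => simp [List.map_cons, List.sum_cons, ih, Finset.sum_add_distrib]

----------------------------------------------------------------
-- uniqueness of x(E)
----------------------------------------------------------------

lemma IsXE_unique {n : ℕ} {a : ℕ → ℕ} {E : Finset (ℕ × ℕ)} (hE : Rp n E)
    {x y : ℕ × ℕ → ℝ} (hx : IsXE n a E x) (hy : IsXE n a E y) : x = y := by
  have key : ∀ N : ℕ, ∀ p : ℕ × ℕ, p.2 - p.1 ≤ N → x p = y p := by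
    intro N
    induction N with
    | zero =>
      intro p hp
      by_cases hpE : p ∈ E
      · have := (hE.valid hpE).2.1; omega
      · rw [hx.1 p hpE, hy.1 p hpE]
    | succ N ih =>
      intro p hp
      by_cases hpE : p ∈ E
      · have hval := (hE.valid hpE).2.1
        have hsum : ((dseg p.1 p.2).map fun q => x q - y q).sum = 0 := by
          rw [← Sval_sub, hx.2 p hpE, hy.2 p hpE]; ring
        have hzero : ∀ q ∈ dseg p.1 p.2, q ≠ p → x q - y q = 0 := by
          intro q hq hqp
          have hs : StrictSub q (p.1, p.2) := ⟨mem_dseg.1 hq, by rwa [Prod.mk.eta]⟩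
          have hlen := hs.len
          simp only at hlen
          have : x q = y q := ih q (by omega)
          linarith
        rw [sum_single _ _ p hzero] at hsum
        have hpd : p ∈ dseg p.1 p.2 :=
          mem_dseg.2 ⟨le_rfl, le_rfl, hval, Or.inl rfl⟩
        have hc : 0 < (dseg p.1 p.2).count p := List.count_pos_iff.2 hpd
        have hc' : ((dseg p.1 p.2).count p : ℝ) ≠ 0 := by
          exact_mod_cast (by omega : (dseg p.1 p.2).count p ≠ 0)
        rcases mul_eq_zero.1 hsum with h | h
        · exact absurd h hc'
        · linarith
      · rw [hx.1 p hpE, hy.1 p hpE]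
  funext p
  exact key (p.2 - p.1) p le_rfl

----------------------------------------------------------------
-- the candidate point yE
----------------------------------------------------------------

open Classical in
noncomputable def yE (E : Finset (ℕ × ℕ)) (a : ℕ → ℕ) (n : ℕ) : ℕ × ℕ → ℝ :=
  fun p => ∑ i ∈ Finset.range n, if inA E i p then (a i : ℝ) else 0

lemma yE_nonneg (E : Finset (ℕ × ℕ)) (a : ℕ → ℕ) (n : ℕ) (p : ℕ × ℕ) :
    0 ≤ yE E a n p := by
  apply Finset.sum_nonneg
  intro i _
  split_ifs
  · positivity
  · exact le_rfl

lemma yE_support {E : Finset (ℕ × ℕ)} {a : ℕ → ℕ} {n : ℕ} {p : ℕ × ℕ}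
    (hp : p ∉ E) : yE E a n p = 0 := by
  apply Finset.sum_eq_zero
  intro i _
  rw [if_neg fun h => hp (inA_mem h)]

open Classical in
/-- The value of the `i`-indicator sum along the path `dseg p.1 p.2`, for `p ∈ E`. -/
lemma indicator_sum_dseg {n : ℕ} {a : ℕ → ℕ} {E : Finset (ℕ × ℕ)} (hE : Rp n E)
    {p : ℕ × ℕ} (hp : p ∈ E) (i : ℕ) :
    ((dseg p.1 p.2).map fun q => if inA E i q then (a i : ℝ) else 0).sum =
      if p.1 ≤ i ∧ i < p.2 then (a i : ℝ) else 0 := by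
  rw [← List.sum_toFinset _ (dseg_nodup p.1 p.2)]
  rw [← Finset.sum_filter, Finset.sum_const]
  by_cases hgap : p.1 ≤ i ∧ i < p.2
  · rw [if_pos hgap]
    obtain ⟨q₀, ⟨hq₀s, hq₀A⟩, huniq⟩ := inA_exists_unique hE hp hgap.1 hgap.2
    have hfil : ((dseg p.1 p.2).toFinset.filter fun q => inA E i q) = {q₀} := by
      ext r
      simp only [Finset.mem_filter, List.mem_toFinset, Finset.mem_singleton]
      constructor
      · rintro ⟨hr, hrA⟩
        exact huniq r ⟨mem_dseg.1 hr, hrA⟩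
      · rintro rfl
        exact ⟨mem_dseg.2 hq₀s, hq₀A⟩
    rw [hfil]
    simp
  · rw [if_neg hgap]
    have hfil : ((dseg p.1 p.2).toFinset.filter fun q => inA E i q) = ∅ := by
      rw [Finset.filter_eq_empty_iff]
      intro r hr hrA
      obtain ⟨h1, h2, h3, h4⟩ := mem_dseg.1 (List.mem_toFinset.1 hr)
      obtain ⟨g1, g2⟩ := inA_gap hrA
      simp only at h1 h2
      omega
    rw [hfil]
    simp

/-- `yE` satisfies the defining equations of `x(E)`. -/
lemma yE_isXE {n : ℕ} {a : ℕ → ℕ} {E : Finset (ℕ × ℕ)} (hE : Rp n E) :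
    IsXE n a E (yE E a n) := by
  classical
  constructor
  · exact fun p hp => yE_support hp
  · intro p hp
    have hval := hE.valid hp
    have hunf : List.map (yE E a n) (dseg p.1 p.2) =
        List.map (fun q => ∑ i ∈ Finset.range n, if inA E i q then (a i : ℝ) else 0)
          (dseg p.1 p.2) := rfl
    rw [Sval, hunf, list_sum_finset_sum]
    calc (∑ i ∈ Finset.range n,
            ((dseg p.1 p.2).map fun q => if inA E i q then (a i : ℝ) else 0).sum)
        = ∑ i ∈ Finset.range n, if p.1 ≤ i ∧ i < p.2 then (a i : ℝ) else 0 := by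
          exact Finset.sum_congr rfl fun i _ => indicator_sum_dseg hE hp i
      _ = ∑ i ∈ Finset.range n, if i ∈ Finset.Ico p.1 p.2 then (a i : ℝ) else 0 := by
          exact Finset.sum_congr rfl fun i _ => by simp only [Finset.mem_Ico]
      _ = ∑ i ∈ Finset.range n ∩ Finset.Ico p.1 p.2, (a i : ℝ) := by
          rw [Finset.sum_ite_mem]
      _ = ∑ k ∈ Finset.Ico p.1 p.2, (a k : ℝ) := by
          congr 1
          rw [Finset.inter_eq_right]
          intro k hk
          rw [Finset.mem_Ico] at hk
          rw [Finset.mem_range]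
          omega

----------------------------------------------------------------
-- Dyck path structure
----------------------------------------------------------------

def StepLe (u v : ℕ × ℕ) : Prop := u.1 ≤ v.1 ∧ u.2 ≤ v.2 ∧ u.1 + u.2 < v.1 + v.2

instance : IsTrans (ℕ × ℕ) StepLe := by
  refine ⟨fun u v w h1 h2 => ?_⟩
  obtain ⟨a1, a2, a3⟩ := h1
  obtain ⟨b1, b2, b3⟩ := h2
  exact ⟨by omega, by omega, by omega⟩

lemma dyck_pairwise_s7 {d : List (ℕ × ℕ)} (h : List.Chain' PathStep d) :
    d.Pairwise StepLe := by
  rw [← List.isChain_iff_pairwise]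
  refine List.IsChain.imp ?_ h
  intro u v huv
  rcases huv with h' | h'
  · subst h'
    exact ⟨Nat.le_succ _, le_rfl, Nat.add_lt_add_right (Nat.lt_succ_self u.1) u.2⟩
  · subst h'
    exact ⟨le_rfl, Nat.le_succ _, Nat.add_lt_add_left (Nat.lt_succ_self u.2) u.1⟩

lemma dyck_nodup {d : List (ℕ × ℕ)} (h : List.Chain' PathStep d) : d.Nodup := by
  refine List.Pairwise.imp ?_ (dyck_pairwise_s7 h)
  intro u v huv he
  subst he
  exact absurd huv.2.2 (lt_irrefl _)

lemma dyck_comparable {d : List (ℕ × ℕ)} (h : List.Chain' PathStep d) :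
    ∀ u ∈ d, ∀ v ∈ d, u ≠ v → StepLe u v ∨ StepLe v u := by
  have hp : d.Pairwise fun u v => StepLe u v ∨ StepLe v u :=
    List.Pairwise.imp (fun huv => Or.inl huv) (dyck_pairwise_s7 h)
  intro u hu v hv huv
  haveI : Std.Symm (fun u v : ℕ × ℕ => StepLe u v ∨ StepLe v u) := ⟨fun _ _ hab => Or.symm hab⟩
  exact List.Pairwise.forall hp hu hv huv

lemma ex_first : ∀ (d : List (ℕ × ℕ)), List.Chain' PathStep d →
    (∃ e, d.getLast? = some (e, e + 1)) →
    ∀ q ∈ d, ∀ i, q.1 ≤ i → i < q.2 → ∃ r ∈ d, r.1 = i := by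
  intro d
  induction d with
  | nil => intro _ _ q hq; simp at hq
  | cons hd tl ih =>
    intro hchain hlast q hq i hi1 hi2
    rcases List.mem_cons.1 hq with rfl | hq'
    · by_cases hqi : q.1 = i
      · exact ⟨q, List.mem_cons_self, hqi⟩
      · cases tl with
        | nil =>
          obtain ⟨e, he⟩ := hlast
          simp only [List.getLast?_singleton, Option.some_inj] at he
          have h1 : q.1 = e ∧ q.2 = e + 1 := by rw [he]; exact ⟨rfl, rfl⟩
          omega
        | cons b tl' =>
          have hstep : PathStep q b := (List.isChain_cons_cons.1 hchain).1
          have hchain' : List.Chain' PathStep (b :: tl') := (List.isChain_cons_cons.1 hchain).2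
          have hlast' : ∃ e, (b :: tl').getLast? = some (e, e + 1) := by
            obtain ⟨e, he⟩ := hlast
            rw [List.getLast?_cons_cons] at he
            exact ⟨e, he⟩
          have hb : b.1 ≤ i ∧ i < b.2 := by
            rcases hstep with h' | h' <;>
              (rw [h']; exact ⟨by simp; omega, by simp; omega⟩)
          obtain ⟨r, hr, hri⟩ := ih hchain' hlast' b (List.mem_cons_self) i hb.1 hb.2
          exact ⟨r, List.mem_cons_of_mem _ hr, hri⟩
    · cases tl with
      | nil => simp at hq'
      | cons b tl' =>
        have hchain' : List.Chain' PathStep (b :: tl') := (List.isChain_cons_cons.1 hchain).2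
        have hlast' : ∃ e, (b :: tl').getLast? = some (e, e + 1) := by
          obtain ⟨e, he⟩ := hlast
          rw [List.getLast?_cons_cons] at he
          exact ⟨e, he⟩
        obtain ⟨r, hr, hri⟩ := ih hchain' hlast' q hq' i hi1 hi2
        exact ⟨r, List.mem_cons_of_mem _ hr, hri⟩

open Classical in
lemma yE_mem_FFLV {n : ℕ} {a : ℕ → ℕ} {E : Finset (ℕ × ℕ)} (hE : Rp n E) :
    yE E a n ∈ FFLV n a := by
  refine ⟨?_, yE_nonneg E a n, ?_⟩
  · intro p hp
    apply yE_support
    intro hpE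
    exact hp (hE.1 p hpE)
  · intro d hd
    obtain ⟨hne, hvalid, hhead, hlastd, hchain⟩ := hd
    have hnodup := dyck_nodup hchain
    have hcomp := dyck_comparable hchain
    have hunf : List.map (yE E a n) d =
        List.map (fun q => ∑ i ∈ Finset.range n, if inA E i q then (a i : ℝ) else 0) d := rfl
    rw [Sval, hunf, list_sum_finset_sum]
    have hbound : ∀ i ∈ Finset.range n,
        (d.map fun q => if inA E i q then (a i : ℝ) else 0).sum ≤
          if i ∈ (d.map Prod.fst).toFinset then (a i : ℝ) else 0 := by
      intro i _
      rw [← List.sum_toFinset _ hnodup, ← Finset.sum_filter, Finset.sum_const]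
      by_cases hfe : (d.toFinset.filter fun q => inA E i q) = ∅
      · rw [hfe]
        simp only [Finset.card_empty, zero_smul]
        split_ifs
        · positivity
        · exact le_rfl
      · obtain ⟨q, hq⟩ := Finset.nonempty_iff_ne_empty.2 hfe
        rw [Finset.mem_filter, List.mem_toFinset] at hq
        have hifirst : i ∈ (d.map Prod.fst).toFinset := by
          obtain ⟨g1, g2⟩ := inA_gap hq.2
          obtain ⟨r, hr, hri⟩ := ex_first d hchain hlastd q hq.1 i g1 g2
          rw [List.mem_toFinset]
          exact List.mem_map.2 ⟨r, hr, hri⟩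
        rw [if_pos hifirst]
        have hcard : (d.toFinset.filter fun q => inA E i q).card ≤ 1 := by
          rw [Finset.card_le_one]
          intro u hu v hv
          rw [Finset.mem_filter, List.mem_toFinset] at hu hv
          by_contra huv
          rcases hcomp u hu.1 v hv.1 huv with hc | hc <;>
            rcases inA_nested hE hu.2 hv.2 huv with hnest | hnest <;>
            (obtain ⟨c1, c2, c3⟩ := hc; obtain ⟨e1, e2⟩ := hnest; omega)
        rw [nsmul_eq_mul]
        have h1 : ((d.toFinset.filter fun q => inA E i q).card : ℝ) ≤ 1 := by
          exact_mod_cast hcard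
        have h2 : (0 : ℝ) ≤ (a i : ℝ) := by positivity
        nlinarith
    calc (∑ i ∈ Finset.range n, (d.map fun q => if inA E i q then (a i : ℝ) else 0).sum)
        ≤ ∑ i ∈ Finset.range n, if i ∈ (d.map Prod.fst).toFinset then (a i : ℝ) else 0 :=
          Finset.sum_le_sum hbound
      _ = ∑ i ∈ Finset.range n ∩ (d.map Prod.fst).toFinset, (a i : ℝ) := by
          rw [Finset.sum_ite_mem]
      _ = ∑ i ∈ (d.map Prod.fst).toFinset, (a i : ℝ) := by
          congr 1
          rw [Finset.inter_eq_right]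
          intro k hk
          rw [List.mem_toFinset] at hk
          obtain ⟨r, hr, hrk⟩ := List.mem_map.1 hk
          have := hvalid r hr
          rw [Finset.mem_range]
          obtain ⟨v1, v2, v3⟩ := this
          omega
      _ = (Mval a d : ℝ) := by rw [Mval]; push_cast; rfl

/-- for `E ∈ R_p` the point `x(E)` lies in `P_λ` and is a vertex of `P_λ`. -/
theorem xE_is_vertex (n : ℕ) (hn : 2 ≤ n) (a : ℕ → ℕ)
    (E : Finset (ℕ × ℕ)) (hE : Rp n E) (x : ℕ × ℕ → ℝ) (hx : IsXE n a E x) :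
    x ∈ FFLV n a ∧ x ∈ Set.extremePoints ℝ (FFLV n a) := by
  have hxy : x = yE E a n := IsXE_unique hE hx (yE_isXE hE)
  have hmem : x ∈ FFLV n a := by rw [hxy]; exact yE_mem_FFLV hE
  refine ⟨hmem, ?_⟩
  rw [mem_extremePoints]
  refine ⟨hmem, ?_⟩
  intro x₁ h₁ x₂ h₂ hseg
  rw [openSegment] at hseg
  obtain ⟨c1, c2, hc1, hc2, hc12, hsum⟩ := hseg
  have key : ∀ c d : ℝ, 0 < c → 0 < d → c + d = 1 → ∀ z w : ℕ × ℕ → ℝ,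
      z ∈ FFLV n a → w ∈ FFLV n a → c • z + d • w = x → IsXE n a E z := by
    intro c d hc hd hcd z w hz hw hzw
    constructor
    · intro p hp
      have hxp : x p = 0 := hx.1 p hp
      have happ : c * z p + d * w p = 0 := by
        rw [← hxp, ← hzw]
        simp [Pi.add_apply, Pi.smul_apply, smul_eq_mul]
      have hz0 : 0 ≤ z p := hz.2.1 p
      have hw0 : 0 ≤ w p := hw.2.1 p
      have h1 : c * z p = 0 := by nlinarith
      rcases mul_eq_zero.1 h1 with h | h
      · exact absurd h (ne_of_gt hc)
      · exact h
    · intro p hp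
      have hval := hE.valid hp
      have hdy : IsDyckPath n (dseg p.1 p.2) := dseg_dyck hval.1 hval.2.1 hval.2.2
      set M : ℝ := ∑ k ∈ Finset.Ico p.1 p.2, (a k : ℝ) with hM
      have hMv : (Mval a (dseg p.1 p.2) : ℝ) = M := by
        rw [Mval_dseg a hval.2.1, hM]; push_cast; rfl
      have hxs : Sval x (dseg p.1 p.2) = M := hx.2 p hp
      have h1' := hz.2.2 _ hdy
      have h2' := hw.2.2 _ hdy
      rw [hMv] at h1' h2'
      have hcombo : c * Sval z (dseg p.1 p.2) + d * Sval w (dseg p.1 p.2) = M := by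
        rw [← Sval_combo, hzw, hxs]
      have e1 : 0 ≤ c * (M - Sval z (dseg p.1 p.2)) :=
        mul_nonneg hc.le (by linarith)
      have e2 : 0 ≤ d * (M - Sval w (dseg p.1 p.2)) :=
        mul_nonneg hd.le (by linarith)
      have e3 : c * (M - Sval z (dseg p.1 p.2)) + d * (M - Sval w (dseg p.1 p.2)) = 0 := by
        have : (c + d) * M = M := by rw [hcd]; ring
        nlinarith [hcombo]
      have e4 : c * (M - Sval z (dseg p.1 p.2)) = 0 := by linarith
      rcases mul_eq_zero.1 e4 with h | h
      · exact absurd h (ne_of_gt hc)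
      · linarith
  have hx₁ : x₁ = x := IsXE_unique hE (key c1 c2 hc1 hc2 hc12 x₁ x₂ h₁ h₂ hsum) hx
  have hx₂ : x₂ = x := by
    refine IsXE_unique hE (key c2 c1 hc2 hc1 (by linarith) x₂ x₁ h₂ h₁ ?_) hx
    rw [add_comm]
    exact hsum
  exact ⟨hx₁, hx₂⟩
end
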